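/- arXiv:1504.06843 — 4 statements merged into one kernel-verified Lean document; each statement's English description precedes it below -/
import Mathlib

section
/- Let g be a finite-dimensional Lie algebra over a field k of characteristic zero, and let r ∈ g ⊗ g with symmetric part s and skew-symmetric part Λ. Then r is a classical r-matrix on g (i.e., δ_r(x) = ad_x r defines a Lie bialgebra structure) if and only if s is ad-invariant and the Schouten bracket [Λ,Λ] ∈ ∧³g is ad-invariant. -/
set_option linter.unusedSectionVars false

noncomputable section

open LinearMap Module

variable {k : Type*} [Field k] [CharZero k]
variable {g : Type*} [LieRing g] [LieAlgebra k g] [FiniteDimensional k g]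

namespace Paper

/-- The transpose of the adjoint action on the dual space: `adT x ξ = ξ ∘ (ad x)`. -/
def adT (x : g) (ξ : Module.Dual k g) : Module.Dual k g :=
  (LieAlgebra.ad k g x).dualMap ξ

@[simp] lemma adT_apply (x : g) (ξ : Module.Dual k g) (y : g) :
    adT x ξ y = ξ ⁅x, y⁆ := rfl

/-- Skew-symmetry of a 2-tensor on `g`, encoded via its sharp map `g* → g`. -/
def IsSkewT (L : Module.Dual k g →ₗ[k] g) : Prop :=
  ∀ ξ η : Module.Dual k g, ξ (L η) = - η (L ξ)

/-- Symmetry of a 2-tensor on `g`, encoded via its sharp map. -/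
def IsSymmT (S : Module.Dual k g →ₗ[k] g) : Prop :=
  ∀ ξ η : Module.Dual k g, ξ (S η) = η (S ξ)

/-- ad-invariance of a 2-tensor on `g`, encoded via its sharp map. -/
def IsInvT (S : Module.Dual k g →ₗ[k] g) : Prop := ∀ (x : g) ξ, S (adT x ξ) = - ⁅x, S ξ⁆

/-- The sharp map of the coboundary cobracket `δ_r(x) = ad_x r`, where `R = r^#`. -/
def cobd (R : Module.Dual k g →ₗ[k] g) (x : g) : Module.Dual k g →ₗ[k] g :=
  (LieAlgebra.ad k g x) ∘ₗ R + R ∘ₗ (LieAlgebra.ad k g x).dualMap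

/-- The coboundary cobracket, bundled linearly in `x`. -/
def cobdL (R : Module.Dual k g →ₗ[k] g) : g →ₗ[k] (Module.Dual k g →ₗ[k] g) where
  toFun x := cobd R x
  map_add' x y := by
    ext ξ
    have h : ((LieAlgebra.ad k g x + LieAlgebra.ad k g y).dualMap ξ)
        = (LieAlgebra.ad k g x).dualMap ξ + (LieAlgebra.ad k g y).dualMap ξ := by
      ext z; simp
    simp [cobd, add_lie, h]
    abel
  map_smul' c x := by
    ext ξ
    have h : ((c • LieAlgebra.ad k g x).dualMap ξ)
        = c • (LieAlgebra.ad k g x).dualMap ξ := by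
      ext z; simp
    simp [cobd, smul_lie, h]

/-- The bracket on `g*` dual to a cobracket `D` (with `δ(x)(ξ,η) = ξ (D x η)`). -/
def dualBr (D : g →ₗ[k] (Module.Dual k g →ₗ[k] g)) (ξ η : Module.Dual k g) :
    Module.Dual k g :=
  ξ ∘ₗ (D.flip η)

@[simp] lemma dualBr_apply (D : g →ₗ[k] (Module.Dual k g →ₗ[k] g))
    (ξ η : Module.Dual k g) (x : g) : dualBr D ξ η x = ξ (D x η) := rfl

/-- `½[Λ,Λ]` as a trilinear form, where `L = Λ^#`. -/
def halfSch (L : Module.Dual k g →ₗ[k] g) (ξ η ζ : Module.Dual k g) : k :=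
  ξ ⁅L η, L ζ⁆ + η ⁅L ζ, L ξ⁆ + ζ ⁅L ξ, L η⁆

/-- `CYB(s)` as a trilinear form, where `S = s^#`. -/
def CYBs (S : Module.Dual k g →ₗ[k] g) (ξ η ζ : Module.Dual k g) : k :=
  ξ ⁅S η, S ζ⁆

/-- `CYB(r)` as a trilinear form, where `r = Λ + s` with `L = Λ^#` (skew) and `S = s^#`
(symmetric), so that `r^# = L + S` and `(r²¹)^# = S - L`. -/
def CYBform (L S : Module.Dual k g →ₗ[k] g) (ξ η ζ : Module.Dual k g) : k :=
  ξ ⁅(S - L) η, (S - L) ζ⁆ + η ⁅(L + S) ξ, (S - L) ζ⁆ + ζ ⁅(L + S) ξ, (L + S) η⁆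

/-- ad-invariance of a 3-tensor on `g`, encoded as a trilinear form. -/
def IsInvForm (T : Module.Dual k g → Module.Dual k g → Module.Dual k g → k) : Prop :=
  ∀ (x : g) ξ η ζ, T (adT x ξ) η ζ + T ξ (adT x η) ζ + T ξ η (adT x ζ) = 0

end Paper

section Aux

open Paper

lemma Aux.skew_pair (φ : Module.Dual k g) (a b : g) : φ ⁅a, b⁆ = - φ ⁅b, a⁆ := by
  rw [← lie_skew, map_neg]

lemma Aux.jac_pair (φ : Module.Dual k g) (x a b : g) :
    φ ⁅⁅x, a⁆, b⁆ - φ ⁅⁅x, b⁆, a⁆ + φ ⁅x, ⁅b, a⁆⁆ = 0 := by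
  have h : ⁅⁅x, a⁆, b⁆ - ⁅⁅x, b⁆, a⁆ + ⁅x, ⁅b, a⁆⁆ = 0 := by
    rw [lie_lie, lie_lie]
    rw [show ⁅b, ⁅x, a⁆⁆ = -⁅⁅x, a⁆, b⁆ from (neg_eq_iff_eq_neg.mpr (lie_skew _ _).symm).symm]
    rw [lie_lie]
    abel
  calc φ ⁅⁅x, a⁆, b⁆ - φ ⁅⁅x, b⁆, a⁆ + φ ⁅x, ⁅b, a⁆⁆
      = φ (⁅⁅x, a⁆, b⁆ - ⁅⁅x, b⁆, a⁆ + ⁅x, ⁅b, a⁆⁆) := by simp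
    _ = 0 := by rw [h, map_zero]

lemma Aux.cobd_apply (R : Module.Dual k g →ₗ[k] g) (x : g) (ξ : Module.Dual k g) :
    Paper.cobd R x ξ = ⁅x, R ξ⁆ + R (Paper.adT x ξ) := rfl

lemma Aux.cobd_pair (L S : Module.Dual k g →ₗ[k] g) (hL : IsSkewT L)
    (x : g) (ξ η : Module.Dual k g) :
    ξ (cobd (L + S) x η) = ξ ⁅x, L η⁆ + ξ ⁅x, S η⁆ - η ⁅x, L ξ⁆ + ξ (S (adT x η)) := by
  have e1 : ξ (L (adT x η)) = - η ⁅x, L ξ⁆ := by rw [hL]; simp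
  rw [Aux.cobd_apply]
  simp only [LinearMap.add_apply, map_add, lie_add, e1]
  ring

/-- Symmetrized pairing of the cobracket: detects the invariance defect of `S`. -/
lemma Aux.symm_part (L S : Module.Dual k g →ₗ[k] g) (hL : IsSkewT L) (hS : IsSymmT S)
    (x : g) (ξ η : Module.Dual k g) :
    ξ (cobd (L + S) x η) + η (cobd (L + S) x ξ)
      = 2 * ξ (⁅x, S η⁆ + S (adT x η)) := by
  rw [Aux.cobd_pair L S hL, Aux.cobd_pair L S hL]
  have e1 : η (S (adT x ξ)) = ξ ⁅x, S η⁆ := by rw [hS]; simp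
  have e2 : ξ (S (adT x η)) = η ⁅x, S ξ⁆ := by rw [hS]; simp
  rw [map_add, e1, ← e2]
  ring

/-- Given invariance of `S`, the dual bracket comes from `L` alone. -/
lemma Aux.br_eq (L S : Module.Dual k g →ₗ[k] g) (hL : IsSkewT L) (hInv : IsInvT S)
    (x : g) (ξ η : Module.Dual k g) :
    dualBr (cobdL (L + S)) ξ η x = ξ ⁅x, L η⁆ - η ⁅x, L ξ⁆ := by
  have : dualBr (cobdL (L + S)) ξ η x = ξ (cobd (L + S) x η) := rfl
  rw [this, Aux.cobd_pair L S hL, hInv x η, map_neg]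
  ring

/-- Key identity: the co-Jacobi defect equals minus the invariance defect of `halfSch L`. -/
lemma Aux.key (L S : Module.Dual k g →ₗ[k] g) (hL : IsSkewT L) (hInv : IsInvT S)
    (x : g) (ξ η ζ : Module.Dual k g) :
    (dualBr (cobdL (L + S)) (dualBr (cobdL (L + S)) ξ η) ζ
      + dualBr (cobdL (L + S)) (dualBr (cobdL (L + S)) η ζ) ξ
      + dualBr (cobdL (L + S)) (dualBr (cobdL (L + S)) ζ ξ) η) x
    + (halfSch L (adT x ξ) η ζ + halfSch L ξ (adT x η) ζ + halfSch L ξ η (adT x ζ)) = 0 := by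
  have step : ∀ ξ η ζ : Module.Dual k g,
      dualBr (cobdL (L + S)) (dualBr (cobdL (L + S)) ξ η) ζ x
        = ξ ⁅⁅x, L ζ⁆, L η⁆ - η ⁅⁅x, L ζ⁆, L ξ⁆
          + ξ ⁅L (adT x ζ), L η⁆ - η ⁅L (adT x ζ), L ξ⁆ := by
    intro ξ η ζ
    rw [Aux.br_eq L S hL hInv]
    have e1 : dualBr (cobdL (L + S)) ξ η ⁅x, L ζ⁆
        = ξ ⁅⁅x, L ζ⁆, L η⁆ - η ⁅⁅x, L ζ⁆, L ξ⁆ := Aux.br_eq L S hL hInv _ ξ η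
    have e2 : ζ ⁅x, L (dualBr (cobdL (L + S)) ξ η)⁆
        = - (ξ ⁅L (adT x ζ), L η⁆ - η ⁅L (adT x ζ), L ξ⁆) := by
      have h1 : ζ ⁅x, L (dualBr (cobdL (L + S)) ξ η)⁆
          = (adT x ζ) (L (dualBr (cobdL (L + S)) ξ η)) := by simp
      rw [h1, hL (adT x ζ) (dualBr (cobdL (L + S)) ξ η),
        Aux.br_eq L S hL hInv (L (adT x ζ)) ξ η]
    rw [e1, e2]
    ring
  simp only [LinearMap.add_apply]
  rw [step ξ η ζ, step η ζ ξ, step ζ ξ η]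
  simp only [halfSch, adT_apply]
  linear_combination
    Aux.jac_pair ξ x (L ζ) (L η) + Aux.jac_pair η x (L ξ) (L ζ)
    + Aux.jac_pair ζ x (L η) (L ξ)
    + Aux.skew_pair ξ (L (adT x ζ)) (L η)
    + Aux.skew_pair η (L (adT x ξ)) (L ζ)
    + Aux.skew_pair ζ (L (adT x η)) (L ξ)

/-- The cocycle identity always holds for a coboundary cobracket. -/
lemma Aux.cocycle (R : Module.Dual k g →ₗ[k] g) (x y : g) :
    Paper.cobd R ⁅x, y⁆
      = ((LieAlgebra.ad k g x) ∘ₗ Paper.cobd R y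
           + Paper.cobd R y ∘ₗ (LieAlgebra.ad k g x).dualMap)
        - ((LieAlgebra.ad k g y) ∘ₗ Paper.cobd R x
           + Paper.cobd R x ∘ₗ (LieAlgebra.ad k g y).dualMap) := by
  ext ξ
  have hadT : ∀ (a b : g) (μ : Module.Dual k g),
      Paper.adT ⁅a, b⁆ μ = Paper.adT b (Paper.adT a μ) - Paper.adT a (Paper.adT b μ) := by
    intro a b μ; ext z; simp [lie_lie]
  simp only [LinearMap.sub_apply, LinearMap.add_apply, LinearMap.comp_apply,
    Aux.cobd_apply, LieAlgebra.ad_apply]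
  show ⁅⁅x, y⁆, R ξ⁆ + R (Paper.adT ⁅x, y⁆ ξ) = _
  rw [hadT, map_sub, lie_lie]
  show _ = ⁅x, ⁅y, R ξ⁆ + R (Paper.adT y ξ)⁆
      + (⁅y, R (Paper.adT x ξ)⁆ + R (Paper.adT y (Paper.adT x ξ)))
      - (⁅y, ⁅x, R ξ⁆ + R (Paper.adT x ξ)⁆
      + (⁅x, R (Paper.adT y ξ)⁆ + R (Paper.adT x (Paper.adT y ξ))))
  rw [lie_add, lie_add]
  abel

end Aux

/-- For `r = Λ + s ∈ g ⊗ g` (encoded by the sharp maps `L = Λ^#` skew and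
`S = s^#` symmetric), `r` is a classical `r`-matrix on `g` — i.e. `δ_r(x) = ad_x r` is
skew-valued, its dual map is a Lie bracket on `g*` (alternating + Jacobi), and `δ_r`
satisfies the cocycle condition — if and only if `s` is ad-invariant and the Schouten
bracket `[Λ,Λ] ∈ ∧³g` is ad-invariant. -/
theorem statement0 (L S : Module.Dual k g →ₗ[k] g)
    (hL : Paper.IsSkewT L) (hS : Paper.IsSymmT S) :
    ((∀ x : g, Paper.IsSkewT (Paper.cobd (L + S) x)) ∧
     (∀ ξ : Module.Dual k g, Paper.dualBr (Paper.cobdL (L + S)) ξ ξ = 0) ∧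
     (∀ ξ η ζ : Module.Dual k g,
        Paper.dualBr (Paper.cobdL (L + S)) (Paper.dualBr (Paper.cobdL (L + S)) ξ η) ζ
          + Paper.dualBr (Paper.cobdL (L + S)) (Paper.dualBr (Paper.cobdL (L + S)) η ζ) ξ
          + Paper.dualBr (Paper.cobdL (L + S)) (Paper.dualBr (Paper.cobdL (L + S)) ζ ξ) η = 0) ∧
     (∀ x y : g, Paper.cobd (L + S) ⁅x, y⁆
        = ((LieAlgebra.ad k g x) ∘ₗ Paper.cobd (L + S) y
             + Paper.cobd (L + S) y ∘ₗ (LieAlgebra.ad k g x).dualMap)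
          - ((LieAlgebra.ad k g y) ∘ₗ Paper.cobd (L + S) x
             + Paper.cobd (L + S) x ∘ₗ (LieAlgebra.ad k g y).dualMap)))
    ↔ (Paper.IsInvT S ∧
        Paper.IsInvForm (fun ξ η ζ => (2 : k) * Paper.halfSch L ξ η ζ)) := by
  constructor
  · rintro ⟨h1, -, h3, -⟩
    have hInv : Paper.IsInvT S := by
      intro x ξ
      have hz : ∀ η : Module.Dual k g, η (⁅x, S ξ⁆ + S (Paper.adT x ξ)) = 0 := by
        intro η
        have hsum := Aux.symm_part L S hL hS x η ξ
        rw [h1 x η ξ] at hsum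
        have h2 : (2 : k) * η (⁅x, S ξ⁆ + S (Paper.adT x ξ)) = 0 := by
          linear_combination -hsum
        have : (2 : k) ≠ 0 := two_ne_zero
        exact (mul_eq_zero.mp h2).resolve_left this
      have hv := (Module.forall_dual_apply_eq_zero_iff k
        (⁅x, S ξ⁆ + S (Paper.adT x ξ))).mp hz
      rw [add_comm] at hv
      exact eq_neg_of_add_eq_zero_left hv
    refine ⟨hInv, ?_⟩
    intro x ξ η ζ
    have hk := Aux.key L S hL hInv x ξ η ζ
    have h0 := DFunLike.congr_fun (h3 ξ η ζ) x
    simp only [LinearMap.add_apply, LinearMap.zero_apply] at hk h0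
    simp only [Paper.halfSch] at hk ⊢
    linear_combination 2 * hk - 2 * h0
  · rintro ⟨hInv, hForm⟩
    refine ⟨?_, ?_, ?_, fun x y => Aux.cocycle (L + S) x y⟩
    · intro x ξ η
      have hsum := Aux.symm_part L S hL hS x ξ η
      rw [hInv x η] at hsum
      simp only [add_neg_cancel, map_zero, mul_zero] at hsum
      linear_combination hsum
    · intro ξ
      ext x
      rw [Aux.br_eq L S hL hInv]
      simp
    · intro ξ η ζ
      ext x
      have hk := Aux.key L S hL hInv x ξ η ζ
      have hf := hForm x ξ η ζ
      simp only [LinearMap.add_apply, LinearMap.zero_apply] at hk ⊢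
      linear_combination hk - (1 / 2 : k) * hf
end
end

section
/- Let (g, δ_g) be a finite-dimensional Lie bialgebra with double Lie algebra d = g + g*. An element t ∈ ∧²g is a twisting element (i.e., the Lagrangian subspace k_t = {−t^#(ξ) + ξ : ξ ∈ g*} is a Lie subalgebra of d) if and only if δ_g(t) + ½[t,t] = 0, where δ_g is extended to ∧²g by δ_g(x∧y) = δ_g(x)∧y − x∧δ_g(y) and [·,·] is the Schouten bracket. -/
set_option linter.unusedSectionVars false

noncomputable section

open LinearMap Module

variable {k : Type*} [Field k] [CharZero k]
variable {g : Type*} [LieRing g] [LieAlgebra k g] [FiniteDimensional k g]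

namespace Paper

/-- The bracket of the double Lie algebra `d = g ⊕ g*` of a Lie bialgebra whose cobracket
has sharp maps `D x`:  `[x+ξ, y+η] = [x,y] + ad*_ξ y − ad*_η x + [ξ,η] + ad*_x η − ad*_y ξ`,
where `ad*_ξ y = D y ξ` and `ad*_x η = −adT x η`. -/
def dbl (D : g →ₗ[k] (Module.Dual k g →ₗ[k] g)) (p q : g × Module.Dual k g) :
    g × Module.Dual k g :=
  (⁅p.1, q.1⁆ + D q.1 p.2 - D p.1 q.2,
   dualBr D p.2 q.2 - adT p.1 q.2 + adT q.1 p.2)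

/-- The hypotheses making `(g, δ)` (with `δ(x)^# = D x`) a Lie bialgebra:
skew-valued cobracket, the cocycle condition, and the dual map being a Lie
bracket on `g*` (alternating and satisfying the Jacobi identity). -/
def IsLieBialgebra (D : g →ₗ[k] (Module.Dual k g →ₗ[k] g)) : Prop :=
  (∀ x : g, IsSkewT (D x)) ∧
  (∀ x y : g, D ⁅x, y⁆
     = ((LieAlgebra.ad k g x) ∘ₗ D y + D y ∘ₗ (LieAlgebra.ad k g x).dualMap)
       - ((LieAlgebra.ad k g y) ∘ₗ D x + D x ∘ₗ (LieAlgebra.ad k g y).dualMap)) ∧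
  (∀ ξ : Module.Dual k g, dualBr D ξ ξ = 0) ∧
  (∀ ξ η ζ : Module.Dual k g,
     dualBr D (dualBr D ξ η) ζ + dualBr D (dualBr D η ζ) ξ + dualBr D (dualBr D ζ ξ) η = 0)

end Paper

namespace Paper

/-- The extension of a cobracket `δ` (sharp maps `D x`) to `∧²g` via
`δ(x ∧ y) = δ(x) ∧ y − x ∧ δ(y)`, evaluated as a trilinear form on a skew 2-tensor
with sharp map `T`:  `δ_ext(t)(ξ,η,ζ) = −(ξ(D(Tζ)η) + η(D(Tξ)ζ) + ζ(D(Tη)ξ))`. -/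
def deltaExt (D : g →ₗ[k] (Module.Dual k g →ₗ[k] g)) (T : Module.Dual k g →ₗ[k] g)
    (ξ η ζ : Module.Dual k g) : k :=
  -(ξ (D (T ζ) η) + η (D (T ξ) ζ) + ζ (D (T η) ξ))

end Paper

/-- Let `(g, δ_g)` be a Lie bialgebra (cobracket sharp maps `D x`) with
double Lie algebra `d = g ⊕ g*`.  An element `t ∈ ∧²g` (sharp map `T`, skew) is a
twisting element — i.e. the Lagrangian subspace `k_t = {(−Tξ, ξ) : ξ ∈ g*}` is a Lie
subalgebra of `d` — if and only if `δ_g(t) + ½[t,t] = 0`, where `δ_g` is extended to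
`∧²g` by `δ_g(x∧y) = δ_g(x)∧y − x∧δ_g(y)` and `[·,·]` is the Schouten bracket. -/
theorem statement6 (D : g →ₗ[k] (Module.Dual k g →ₗ[k] g))
    (hD : Paper.IsLieBialgebra D)
    (T : Module.Dual k g →ₗ[k] g) (hT : Paper.IsSkewT T) :
    (∀ ξ η : Module.Dual k g, ∃ ζ : Module.Dual k g,
        Paper.dbl D (-(T ξ), ξ) (-(T η), η) = (-(T ζ), ζ)) ↔
    (∀ ξ η ζ : Module.Dual k g,
        Paper.deltaExt D T ξ η ζ + Paper.halfSch T ξ η ζ = 0) := by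
  have key : ∀ ξ η ζ : Module.Dual k g,
      ζ ((Paper.dbl D (-(T ξ), ξ) (-(T η), η)).1
        + T ((Paper.dbl D (-(T ξ), ξ) (-(T η), η)).2))
      = Paper.deltaExt D T ξ η ζ + Paper.halfSch T ξ η ζ := by
    intro ξ η ζ
    have hTζ : ζ (T ((Paper.dbl D (-(T ξ), ξ) (-(T η), η)).2))
        = - ((Paper.dbl D (-(T ξ), ξ) (-(T η), η)).2) (T ζ) := by
      rw [hT ζ _]
    rw [map_add, hTζ]
    have hskew := hD.1 (T ξ) η ζ
    simp only [Paper.dbl, Paper.dualBr_apply, Paper.adT_apply, map_neg,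
      LinearMap.sub_apply, LinearMap.add_apply, LinearMap.neg_apply,
      Paper.deltaExt, Paper.halfSch, neg_lie, lie_neg, map_sub,
      neg_neg, map_neg, map_add]
    have h1 : ζ (D (T ξ) η) = - η (D (T ξ) ζ) := by rw [hskew]; ring
    have h2 : η ⁅T ζ, T ξ⁆ = - η ⁅T ξ, T ζ⁆ := by
      rw [← lie_skew (T ξ) (T ζ), map_neg, neg_neg]
    rw [h1]
    rw [h2]
    ring
  constructor
  · intro h ξ η ζ
    obtain ⟨μ, hμ⟩ := h ξ η
    have := key ξ η ζ
    rw [hμ] at this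
    simpa using this.symm
  · intro h ξ η
    set A := Paper.dbl D (-(T ξ), ξ) (-(T η), η) with hA
    refine ⟨A.2, ?_⟩
    have hz : A.1 + T A.2 = 0 := by
      rw [← Module.forall_dual_apply_eq_zero_iff k]
      intro ζ
      rw [key ξ η ζ, h ξ η ζ]
    have h1 : A.1 = -(T A.2) := by
      rw [eq_neg_iff_add_eq_zero]; exact hz
    exact Prod.ext h1 rfl
end
end

section
/- Let g be a Lie algebra, r a quasitriangular r-matrix on g with symmetric part s, and λ: g → X(Y) a left Lie algebra action on a manifold Y (a Lie algebra anti-homomorphism to vector fields). For y ∈ Y, the 2-tensor λ(s)(y) vanishes if and only if the stabilizer subalgebra ker(λ_y) ⊂ g (where λ_y(x) = λ(x)(y)) is coisotropic with respect to s, i.e., s^#((ker λ_y)⁰) ⊂ ker λ_y. Consequently, λ(r) is skew-symmetric if and only if every stabilizer subalgebra is coisotropic with respect to s. -/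
set_option linter.unusedSectionVars false

noncomputable section

open LinearMap Module

variable {k : Type*} [Field k] [CharZero k]
variable {g : Type*} [LieRing g] [LieAlgebra k g] [FiniteDimensional k g]

lemma factor_aux {k : Type*} [Field k] {W : Type*} [AddCommGroup W] [Module k W]
    {V : Type*} [AddCommGroup V] [Module k V] (f : W →ₗ[k] V) (ξ : Module.Dual k W)
    (h : ∀ v : W, f v = 0 → ξ v = 0) : ∃ α : Module.Dual k V, f.dualMap α = ξ := by
  have hker : LinearMap.ker f ≤ LinearMap.ker ξ := fun v hv => h v hv
  let e := f.quotKerEquivRange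
  let ξ' : W ⧸ LinearMap.ker f →ₗ[k] k := Submodule.liftQ _ ξ hker
  obtain ⟨r, hr⟩ := (LinearMap.range f).subtype.exists_leftInverse_of_injective
    (Submodule.ker_subtype _)
  refine ⟨ξ' ∘ₗ e.symm.toLinearMap ∘ₗ r, ?_⟩
  ext v
  have h1 : r (f v) = ⟨f v, LinearMap.mem_range_self f v⟩ := by
    have := congrArg (fun m => m (⟨f v, LinearMap.mem_range_self f v⟩ : LinearMap.range f)) hr
    simpa using this
  have h2 : e.symm ⟨f v, LinearMap.mem_range_self f v⟩ = Submodule.Quotient.mk v := by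
    apply e.injective
    simp only [LinearEquiv.apply_symm_apply]
    ext
    simp [e, LinearMap.quotKerEquivRange_apply_mk]
  simp [LinearMap.dualMap_apply, h1, h2, ξ']

/-- Let `r` be a quasitriangular `r`-matrix on `g` with symmetric part
`s` (sharp maps `L` skew, `S` symmetric ad-invariant, `CYB(r)=0`), and let
`λ : g → X(Y)` be a left Lie algebra action on `Y` — modeled pointwise by the family of
linear maps `lam y : g → T_y Y`.  For every `y`, the `2`-tensor `λ(s)(y)` (the bilinear
form `(α,β) ↦ β(λ_y(s^#(λ_y^*α)))` on `T_y^*Y`) vanishes iff the stabilizer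
`ker λ_y ⊆ g` is coisotropic w.r.t. `s` (`s^#((ker λ_y)⁰) ⊆ ker λ_y`).  Consequently
`λ(r)` is skew-symmetric iff every stabilizer subalgebra is coisotropic w.r.t. `s`. -/
theorem statement16 (L S : Module.Dual k g →ₗ[k] g)
    (hL : Paper.IsSkewT L) (hS : Paper.IsSymmT S) (hSinv : Paper.IsInvT S)
    (hCYB : ∀ ξ η ζ : Module.Dual k g, Paper.CYBform L S ξ η ζ = 0)
    (Y : Type*) (V : Y → Type*) [∀ y, AddCommGroup (V y)] [∀ y, Module k (V y)]
    (lam : ∀ y : Y, g →ₗ[k] V y) :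
    -- pointwise: `λ(s)(y) = 0 ↔ ker λ_y` is coisotropic w.r.t. `s`
    (∀ y : Y,
      ((∀ α β : Module.Dual k (V y), β ((lam y) (S ((lam y).dualMap α))) = 0) ↔
        (∀ ξ : Module.Dual k g, (∀ v : g, lam y v = 0 → ξ v = 0) →
            lam y (S ξ) = 0))) ∧
    -- consequently: `λ(r)` is skew-symmetric iff all stabilizers are coisotropic
    ((∀ (y : Y) (α β : Module.Dual k (V y)),
        β ((lam y) ((L + S) ((lam y).dualMap α)))
          = - α ((lam y) ((L + S) ((lam y).dualMap β)))) ↔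
      (∀ (y : Y) (ξ : Module.Dual k g), (∀ v : g, lam y v = 0 → ξ v = 0) →
          lam y (S ξ) = 0)) := by
  have part1 : ∀ y : Y,
      ((∀ α β : Module.Dual k (V y), β ((lam y) (S ((lam y).dualMap α))) = 0) ↔
        (∀ ξ : Module.Dual k g, (∀ v : g, lam y v = 0 → ξ v = 0) →
            lam y (S ξ) = 0)) := by
    intro y
    constructor
    · intro h ξ hξ
      obtain ⟨α, rfl⟩ := factor_aux (lam y) ξ hξ
      rw [← Module.forall_dual_apply_eq_zero_iff k]
      exact fun β => h α β
    · intro h α β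
      have : lam y (S ((lam y).dualMap α)) = 0 :=
        h _ (fun v hv => by simp [LinearMap.dualMap_apply, hv])
      rw [this, map_zero]
  refine ⟨part1, ?_⟩
  constructor
  · intro h y ξ hξ
    refine (part1 y).mp ?_ ξ hξ
    intro α β
    set a := (lam y).dualMap α
    set b := (lam y).dualMap β
    have hβα := h y α β
    have e1 : ∀ (X : Module.Dual k g →ₗ[k] g) (γ δ : Module.Dual k (V y)),
        δ ((lam y) (X ((lam y).dualMap γ))) = ((lam y).dualMap δ) (X ((lam y).dualMap γ)) :=
      fun _ _ _ => rfl
    rw [e1, e1] at hβα; rw [e1]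
    have hLs : b (L a) = - a (L b) := hL b a
    have hSs : b (S a) = a (S b) := hS b a
    have expand : b ((L + S) a) = b (L a) + b (S a) := by simp
    have expand2 : a ((L + S) b) = a (L b) + a (S b) := by simp
    rw [expand, expand2] at hβα
    have h2 : (2 : k) * b (S a) = 0 := by linear_combination hβα - hLs + hSs
    rcases mul_eq_zero.mp h2 with h' | h'
    · exact absurd h' two_ne_zero
    · exact h'
  · intro h y α β
    have h0 : ∀ γ δ : Module.Dual k (V y), δ ((lam y) (S ((lam y).dualMap γ))) = 0 :=
      (part1 y).mpr (h y)
    set a := (lam y).dualMap α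
    set b := (lam y).dualMap β
    have e1 : ∀ (X : Module.Dual k g →ₗ[k] g) (γ δ : Module.Dual k (V y)),
        δ ((lam y) (X ((lam y).dualMap γ))) = ((lam y).dualMap δ) (X ((lam y).dualMap γ)) :=
      fun _ _ _ => rfl
    rw [e1, e1]
    have hSa : b (S a) = 0 := by have := h0 α β; rwa [e1] at this
    have hSb : a (S b) = 0 := by have := h0 β α; rwa [e1] at this
    have hLs : b (L a) = - a (L b) := hL b a
    have expand : b ((L + S) a) = b (L a) + b (S a) := by simp
    have expand2 : a ((L + S) b) = a (L b) + a (S b) := by simp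
    rw [expand, expand2, hSa, hSb, hLs]
    ring
end
end

section
/- Let r be a quasitriangular r-matrix on g with skew part Λ and symmetric part s, and let λ: g → X(Y) be a left Lie algebra action with λ(s) = 0. Then [λ(r), λ(r)] = 2λ(CYB(s)) = 0, so −λ(r) is a Poisson bivector field, and [λ(x), −λ(Λ)] = λ(δ_r(x)) for all x ∈ g, making (Y, −λ(r), λ) a left (g, r)-Poisson space. -/
set_option linter.unusedSectionVars false

noncomputable section

open LinearMap Module

variable {k : Type*} [Field k] [CharZero k]
variable {g : Type*} [LieRing g] [LieAlgebra k g] [FiniteDimensional k g]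

namespace Paper

/-- `ad_x` acting on a 2-tensor with sharp map `T`: the sharp map of `[x, t]`. -/
def adActF (x : g) (T : Module.Dual k g → g) : Module.Dual k g → g :=
  fun ξ => ⁅x, T ξ⁆ + T ((LieAlgebra.ad k g x).dualMap ξ)

/-- The Schouten bracket `[t, t']` of two skew 2-tensors (sharp maps `T, T'`), as a
trilinear form on `g*`. -/
def schPair (T T' : Module.Dual k g → g)
    (ξ η ζ : Module.Dual k g) : k :=
  (ξ ⁅T η, T' ζ⁆ + ξ ⁅T' η, T ζ⁆) + (η ⁅T ζ, T' ξ⁆ + η ⁅T' ζ, T ξ⁆)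
    + (ζ ⁅T ξ, T' η⁆ + ζ ⁅T' ξ, T η⁆)

/-- The extension `δ_ext` of a cobracket-family `E` (with `δ(x)^# = E x`) to `∧²g`,
evaluated on a skew 2-tensor with sharp map `T`, as a trilinear form. -/
def extForm (E : g → (Module.Dual k g → g)) (T : Module.Dual k g → g) :
    Module.Dual k g → Module.Dual k g → Module.Dual k g → k :=
  fun ξ η ζ => -(ξ (E (T ζ) η) + η (E (T ξ) ζ) + ζ (E (T η) ξ))

end Paper

/-- Let `r = Λ + s` be a quasitriangular `r`-matrix on `g` (sharp maps
`L` skew, `S` symmetric ad-invariant, `CYB(r)=0`) and `λ : g → X(Y)` a left Lie algebra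
action with `λ(s) = 0`.  Multivector fields on `Y` in degrees 1,2,3 are modeled by
modules `V1, V2, V3`; `λ` extends to 2- and 3-tensors by `lam2, lam3`; the Schouten
brackets `V1×V2→V2` and `V2×V2→V3` are `b12, b22` and satisfy the anti-homomorphism
identities `[λ(x),λ(t)] = −λ([x,t])`, `[λ(t),λ(t')] = −λ([t,t'])`.  Then
`[λ(r), λ(r)] = 2λ(CYB(s)) = 0`, so `−λ(r)` is a Poisson bivector field, and
`[λ(x), −λ(r)] = λ(δ_r(x))` for all `x`, making `(Y, −λ(r), λ)` a left `(g,r)`-Poisson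
space. -/
theorem statement17 (L S : Module.Dual k g →ₗ[k] g)
    (hL : Paper.IsSkewT L) (hS : Paper.IsSymmT S) (hSinv : Paper.IsInvT S)
    (hCYB : ∀ ξ η ζ : Module.Dual k g, Paper.CYBform L S ξ η ζ = 0)
    (V1 V2 V3 : Type*) [AddCommGroup V1] [Module k V1] [AddCommGroup V2] [Module k V2]
    [AddCommGroup V3] [Module k V3]
    (lam1 : g →ₗ[k] V1)
    (lam2 : (Module.Dual k g → g) →ₗ[k] V2)
    (lam3 : (Module.Dual k g → Module.Dual k g → Module.Dual k g → k) →ₗ[k] V3)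
    (b12 : V1 →ₗ[k] V2 →ₗ[k] V2) (b22 : V2 →ₗ[k] V2 →ₗ[k] V3)
    (hanti : ∀ (x : g) (T : Module.Dual k g → g),
        b12 (lam1 x) (lam2 T) = - lam2 (Paper.adActF x T))
    (hsch : ∀ T T' : Module.Dual k g → g,
        b22 (lam2 T) (lam2 T') = - lam3 (Paper.schPair T T'))
    -- `λ(s) = 0`:
    (hs0 : lam2 (fun ξ => S ξ) = 0)
    -- `λ(CYB(s)) = 0` (which holds since all stabilizers are coisotropic w.r.t. `s`):
    (hcoiso : lam3 (fun ξ η ζ => ξ ⁅S η, S ζ⁆) = 0) :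
    -- `[λ(r), λ(r)] = 2 λ(CYB(s)) = 0`:
    (b22 (lam2 (fun ξ => L ξ + S ξ)) (lam2 (fun ξ => L ξ + S ξ))
        = (2 : k) • lam3 (fun ξ η ζ => ξ ⁅S η, S ζ⁆)) ∧
    (b22 (- lam2 (fun ξ => L ξ + S ξ)) (- lam2 (fun ξ => L ξ + S ξ)) = 0) ∧
    -- `[λ(x), −λ(r)] = λ(δ_r(x))` for all `x`:
    (∀ x : g, b12 (lam1 x) (- lam2 (fun ξ => L ξ + S ξ))
        = lam2 (Paper.adActF x (fun ξ => L ξ + S ξ))) := by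
  -- basic consequence of symmetry + ad-invariance of S
  have hinv : ∀ (x : g) (ξ η : Module.Dual k g), ξ ⁅x, S η⁆ = - η ⁅x, S ξ⁆ := by
    intro x ξ η
    have h1 : S (Paper.adT x η) = - ⁅x, S η⁆ := hSinv x η
    have h2 : ξ (S (Paper.adT x η)) = (Paper.adT x η) (S ξ) := hS ξ (Paper.adT x η)
    have h3 : (Paper.adT x η) (S ξ) = η ⁅x, S ξ⁆ := rfl
    rw [h1, map_neg, h3] at h2
    linear_combination -h2
  -- key pointwise identity: ½[Λ,Λ] = −CYB(s)
  have key : ∀ ξ η ζ : Module.Dual k g,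
      ξ ⁅L η, L ζ⁆ + η ⁅L ζ, L ξ⁆ + ζ ⁅L ξ, L η⁆ = - ξ ⁅S η, S ζ⁆ := by
    intro ξ η ζ
    have hc := hCYB ξ η ζ
    simp only [Paper.CYBform, LinearMap.sub_apply, LinearMap.add_apply,
      lie_sub, sub_lie, lie_add, add_lie, map_sub, map_add] at hc
    have e1 : ξ ⁅L ζ, S η⁆ = - η ⁅L ζ, S ξ⁆ := hinv (L ζ) ξ η
    have e2 : η ⁅L ξ, S ζ⁆ = - ζ ⁅L ξ, S η⁆ := hinv (L ξ) η ζ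
    have e3 : ζ ⁅L η, S ξ⁆ = - ξ ⁅L η, S ζ⁆ := hinv (L η) ζ ξ
    have e4 : η ⁅S ξ, S ζ⁆ = - ζ ⁅S ξ, S η⁆ := hinv (S ξ) η ζ
    -- skew-symmetry of the bracket, applied under linear functionals
    have skew : ∀ (φ : Module.Dual k g) (a b : g), φ ⁅a, b⁆ = - φ ⁅b, a⁆ := by
      intro φ a b
      have := congrArg φ (lie_skew b a)
      rw [map_neg] at this
      linear_combination -this
    have s1 : ξ ⁅S η, L ζ⁆ = - ξ ⁅L ζ, S η⁆ := skew ξ (S η) (L ζ)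
    have s2 : η ⁅S ξ, L ζ⁆ = - η ⁅L ζ, S ξ⁆ := skew η (S ξ) (L ζ)
    have s3 : ζ ⁅S ξ, L η⁆ = - ζ ⁅L η, S ξ⁆ := skew ζ (S ξ) (L η)
    have s4 : η ⁅L ζ, L ξ⁆ = - η ⁅L ξ, L ζ⁆ := skew η (L ζ) (L ξ)
    linear_combination hc + s4 - e2 - e4 + s1 + s2 - e1 - s3 + e3
  -- λ(r) = λ(Λ)
  have hsplit : lam2 (fun ξ => L ξ + S ξ) = lam2 (fun ξ => L ξ) := by
    have h : (fun ξ => L ξ + S ξ) = (fun ξ : Module.Dual k g => L ξ) + (fun ξ => S ξ) :=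
      rfl
    rw [h, map_add, hs0, add_zero]
  -- the Schouten square of Λ equals −2 · CYB(s) as a form
  have hform : Paper.schPair (fun ξ : Module.Dual k g => L ξ) (fun ξ => L ξ)
      = (-2 : k) • (fun ξ η ζ : Module.Dual k g => ξ ⁅S η, S ζ⁆) := by
    funext ξ η ζ
    have hk := key ξ η ζ
    simp only [Paper.schPair, Pi.smul_apply, smul_eq_mul]
    linear_combination (2:k) * hk
  have main : b22 (lam2 (fun ξ => L ξ + S ξ)) (lam2 (fun ξ => L ξ + S ξ))
      = (2 : k) • lam3 (fun ξ η ζ => ξ ⁅S η, S ζ⁆) := by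
    rw [hsplit, hsch, hform, map_smul, ← neg_smul]
    norm_num
  exact ⟨main, by
    rw [map_neg, map_neg, LinearMap.neg_apply, neg_neg, main, hcoiso, smul_zero], by
    intro x
    rw [map_neg, hanti, neg_neg]⟩
end
end
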